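/- Let μ and μ_k (k ∈ ℕ) be isotropic log-concave probability measures on ℝⁿ such that μ_k → μ weakly. Then for every p ≥ 1 and every continuous function g : ℝⁿ → ℝ with |g(x)| ≤ C(1 + ‖x‖^p) for some constant C, one has ∫g dμ_k → ∫g dμ; in particular all (mixed) moments of μ_k converge to the corresponding moments of μ. -/

import Mathlib

open MeasureTheory ProbabilityTheory Filter Topology Pointwise ENNReal

noncomputable section

/-- Euclidean space ℝⁿ. -/
abbrev Euc (n : ℕ) := EuclideanSpace ℝ (Fin n)

/-- A Borel measure is log-concave if `μ(λA + (1-λ)B) ≥ μ(A)^λ μ(B)^(1-λ)` for all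
nonempty compact sets `A, B` and `λ ∈ (0,1)`. -/
def IsLogConcave {α : Type*} [MeasurableSpace α] [TopologicalSpace α]
    [AddCommGroup α] [Module ℝ α] (μ : Measure α) : Prop :=
  ∀ A B : Set α, A.Nonempty → B.Nonempty → IsCompact A → IsCompact B →
    ∀ l : ℝ, 0 < l → l < 1 →
      μ A ^ l * μ B ^ (1 - l) ≤ μ (l • A + (1 - l) • B)

/-- A probability measure on ℝⁿ is isotropic if its mean is `0` and its covariance
matrix is the identity. -/
def IsIsotropic {n : ℕ} (μ : Measure (Euc n)) : Prop :=
  (∫ x, x ∂μ) = 0 ∧ ∀ i j : Fin n, (∫ x, x i * x j ∂μ) = if i = j then 1 else 0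

/-- Total variation distance `2 sup_A |μ(A) - ν(A)|`. -/
def dTV {α : Type*} [MeasurableSpace α] (μ ν : Measure α) : ℝ :=
  2 * ⨆ A : {A : Set α // MeasurableSet A}, |(μ A.1).toReal - (ν A.1).toReal|

/-- Bounded-Lipschitz distance. -/
def dBL {α : Type*} [MeasurableSpace α] [NormedAddCommGroup α] (μ ν : Measure α) : ℝ :=
  ⨆ g : {g : α → ℝ // (∀ x, |g x| ≤ 1) ∧ LipschitzWith 1 g},
    |(∫ x, g.1 x ∂μ) - ∫ x, g.1 x ∂ν|

/-- `L_p` Wasserstein distance. -/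
def Wass {α : Type*} [MeasurableSpace α] [NormedAddCommGroup α]
    (p : ℝ) (μ ν : Measure α) : ℝ :=
  ⨅ π : {π : Measure (α × α) // IsProbabilityMeasure π ∧
      π.map Prod.fst = μ ∧ π.map Prod.snd = ν},
    (∫ q, ‖q.1 - q.2‖ ^ p ∂π.1) ^ (1 / p)

/-- Relative entropy (Kullback–Leibler divergence) `∫ log(dμ/dν) dμ`. -/
def relEnt {α : Type*} [MeasurableSpace α] (μ ν : Measure α) : ℝ :=
  ∫ x, Real.log (μ.rnDeriv ν x).toReal ∂μ

/-- The standard Gaussian measure on ℝⁿ. -/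
def stdGaussian (n : ℕ) : Measure (Euc n) :=
  volume.withDensity fun x =>
    ENNReal.ofReal ((2 * Real.pi) ^ (-(n : ℝ) / 2) * Real.exp (-‖x‖ ^ 2 / 2))

end

noncomputable section

/-!
Isotropy and Chebyshev's inequality put mass at least `3/4` in the ball of radius
`R = 2√(n+1)`. Log-concavity, applied to that ball and a compact piece of `{tR ≤ ‖x‖}` with
weight `2/(t+1)`, upgrades this to Borell's tail bound `ν {tR ≤ ‖x‖} ≤ 3^(-(t+1)/2)`, so all
the measures share a bound on `∫ exp (b‖x‖)`. A continuous `g` of polynomial growth is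
`o(exp (b‖x‖))` at infinity; multiplying it by a compactly supported Urysohn cutoff `χ`
therefore changes every integral uniformly little, while `∫ g χ` converges weakly.
-/

open Real Set Metric Asymptotics

lemma EuclideanSpace.norm_sq_eq_sum_mul_self {ι : Type*} [Fintype ι] (x : EuclideanSpace ℝ ι) :
    ‖x‖ ^ 2 = ∑ i, x i * x i := by
  rw [EuclideanSpace.norm_sq_eq]
  simp only [Real.norm_eq_abs, sq_abs, ← sq]

section Isotropic

variable {n : ℕ} {ν : Measure (Euc n)}

lemma IsIsotropic.integrable_mul_self (h : IsIsotropic ν) (i : Fin n) :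
    Integrable (fun x : Euc n => x i * x i) ν := by
  -- otherwise the integral would be the junk value `0`, not `1`
  by_contra hi
  simpa [integral_undef hi] using h.2 i i

lemma IsIsotropic.integrable_norm_sq (h : IsIsotropic ν) :
    Integrable (fun x : Euc n => ‖x‖ ^ 2) ν := by
  simpa only [EuclideanSpace.norm_sq_eq_sum_mul_self] using
    integrable_finsetSum Finset.univ fun i _ => h.integrable_mul_self i

lemma IsIsotropic.integral_norm_sq (h : IsIsotropic ν) : ∫ x, ‖x‖ ^ 2 ∂ν = n := by
  simp only [EuclideanSpace.norm_sq_eq_sum_mul_self]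
  rw [integral_finsetSum _ fun i _ => h.integrable_mul_self i]
  simp [h.2]

lemma IsIsotropic.measure_le_norm_le [IsFiniteMeasure ν] (h : IsIsotropic ν) {R : ℝ}
    (hR : 0 < R) : ν {x | R ≤ ‖x‖} ≤ ENNReal.ofReal (n / R ^ 2) := by
  have hmarkov := mul_meas_ge_le_integral_of_nonneg (ae_of_all _ fun x => sq_nonneg ‖x‖)
    h.integrable_norm_sq (R ^ 2)
  have hset : {x : Euc n | R ^ 2 ≤ ‖x‖ ^ 2} = {x | R ≤ ‖x‖} := by
    ext x
    exact pow_le_pow_iff_left₀ hR.le (norm_nonneg x) two_ne_zero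
  rw [hset, h.integral_norm_sq] at hmarkov
  rw [ENNReal.le_ofReal_iff_toReal_le (measure_ne_top _ _) (by positivity),
    le_div_iff₀ (by positivity)]
  rw [measureReal_def] at hmarkov
  linarith

end Isotropic

section Borell

variable {E : Type*} [NormedAddCommGroup E] [NormedSpace ℝ E]

lemma smul_add_smul_closedBall_subset {s R l : ℝ} (hl0 : 0 ≤ l) (hl1 : l ≤ 1) :
    l • {x : E | s ≤ ‖x‖} + (1 - l) • closedBall (0 : E) R ⊆
      {x | l * s - (1 - l) * R ≤ ‖x‖} := by
  rintro _ ⟨_, ⟨z, hz, rfl⟩, _, ⟨a, ha, rfl⟩, rfl⟩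
  have hz : s ≤ ‖z‖ := hz
  have ha : ‖a‖ ≤ R := mem_closedBall_zero_iff.1 ha
  calc l * s - (1 - l) * R ≤ ‖l • z‖ - ‖(1 - l) • a‖ := by
        rw [norm_smul, norm_smul, Real.norm_of_nonneg hl0, Real.norm_of_nonneg (by linarith)]
        gcongr
    _ ≤ ‖l • z + (1 - l) • a‖ := norm_sub_le_norm_add _ _

lemma le_rpow_inv_of_rpow_mul_rpow_le {a b θ l : ℝ} (ha : 0 ≤ a) (hθ : 0 < θ) (hθb : θ ≤ b)
    (hl0 : 0 < l) (hl1 : l ≤ 1) (h : a ^ l * b ^ (1 - l) ≤ 1 - θ) :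
    a ≤ ((1 - θ) / θ) ^ l⁻¹ := by
  have hθ1 : θ ≤ 1 := by
    have : 0 ≤ a ^ l * b ^ (1 - l) :=
      mul_nonneg (rpow_nonneg ha l) (rpow_nonneg (hθ.le.trans hθb) _)
    linarith
  have hθl : θ ≤ b ^ (1 - l) :=
    calc θ = θ ^ (1 : ℝ) := (rpow_one θ).symm
      _ ≤ θ ^ (1 - l) := rpow_le_rpow_of_exponent_ge hθ hθ1 (by linarith)
      _ ≤ b ^ (1 - l) := rpow_le_rpow hθ.le hθb (by linarith)
  have hal : a ^ l ≤ (1 - θ) / θ := by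
    rw [le_div_iff₀ hθ]
    nlinarith [rpow_nonneg ha l]
  calc a = (a ^ l) ^ l⁻¹ := (rpow_rpow_inv ha hl0.ne').symm
    _ ≤ ((1 - θ) / θ) ^ l⁻¹ := rpow_le_rpow (rpow_nonneg ha l) hal (inv_nonneg.2 hl0.le)

variable [ProperSpace E] [MeasurableSpace E]

lemma IsLogConcave.measure_le_of_isCompact {ν : Measure E} [IsFiniteMeasure ν]
    (hν : IsLogConcave ν) {R θ t : ℝ} (hR : 0 ≤ R) (hθ : 0 < θ) (hθ1 : θ ≤ 1)
    (hθB : θ ≤ ν.real (closedBall 0 R)) (hball : ν {x | R ≤ ‖x‖} ≤ ENNReal.ofReal (1 - θ))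
    (ht : 1 < t) {K : Set E} (hK : IsCompact K) (hKne : K.Nonempty)
    (hKt : K ⊆ {x | t * R ≤ ‖x‖}) :
    ν K ≤ ENNReal.ofReal (((1 - θ) / θ) ^ ((t + 1) / 2)) := by
  set l := 2 / (t + 1) with hl
  have hl0 : 0 < l := by positivity
  have hl1 : l < 1 := by rw [hl, div_lt_one (by linarith)]; linarith
  have hlR : l * (t * R) - (1 - l) * R = R := by rw [hl]; field_simp; ring
  have hsub : l • K + (1 - l) • closedBall 0 R ⊆ {x : E | R ≤ ‖x‖} :=
    (add_subset_add (smul_set_mono hKt) subset_rfl).trans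
      ((smul_add_smul_closedBall_subset (s := t * R) hl0.le hl1.le).trans_eq (by rw [hlR]))
  have hlc := (hν K _ hKne (nonempty_closedBall.2 hR) hK (isCompact_closedBall 0 R) l hl0
    hl1).trans ((measure_mono hsub).trans hball)
  have hlc_real : ν.real K ^ l * ν.real (closedBall 0 R) ^ (1 - l) ≤ 1 - θ := by
    have := ENNReal.toReal_mono ENNReal.ofReal_ne_top hlc
    rwa [ENNReal.toReal_mul, ← ENNReal.toReal_rpow, ← ENNReal.toReal_rpow,
      ENNReal.toReal_ofReal (by linarith)] at this
  rw [ENNReal.le_ofReal_iff_toReal_le (measure_ne_top _ _) (by positivity)]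
  exact (le_rpow_inv_of_rpow_mul_rpow_le measureReal_nonneg hθ hθB hl0 hl1.le
    hlc_real).trans_eq (by rw [hl, inv_div])

/-- Borell's lemma. -/
theorem IsLogConcave.measure_mul_le_norm_le [BorelSpace E] {ν : Measure E}
    [IsProbabilityMeasure ν] [ν.InnerRegular] (hν : IsLogConcave ν) {R θ : ℝ} (hR : 0 ≤ R)
    (hθ : 0 < θ) (hθ1 : θ ≤ 1)
    (hball : ν {x | R ≤ ‖x‖} ≤ ENNReal.ofReal (1 - θ)) {t : ℝ} (ht : 1 ≤ t) :
    ν {x | t * R ≤ ‖x‖} ≤ ENNReal.ofReal (((1 - θ) / θ) ^ ((t + 1) / 2)) := by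
  rcases ht.eq_or_lt with rfl | ht
  · rw [one_mul, show ((1 : ℝ) + 1) / 2 = 1 by norm_num, Real.rpow_one]
    exact hball.trans (ENNReal.ofReal_le_ofReal (le_div_self (by linarith) hθ hθ1))
  have hθB : θ ≤ ν.real (closedBall 0 R) := by
    have hcompl : (closedBall (0 : E) R)ᶜ ⊆ {x | R ≤ ‖x‖} := fun x hx => by
      simpa using (not_le.1 (mt mem_closedBall_zero_iff.2 hx)).le
    have := measureReal_mono (μ := ν) hcompl
    rw [measureReal_compl measurableSet_closedBall, probReal_univ] at this
    have hball_real : ν.real {x | R ≤ ‖x‖} ≤ 1 - θ :=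
      ENNReal.toReal_le_of_le_ofReal (by linarith) hball
    linarith
  rw [(isClosed_le continuous_const continuous_norm).measurableSet.measure_eq_iSup_isCompact]
  refine iSup₂_le fun K hKt => iSup_le fun hK => ?_
  rcases K.eq_empty_or_nonempty with rfl | hKne
  · simp
  exact hν.measure_le_of_isCompact hR hθ hθ1 hθB hball ht hK hKne hKt

end Borell

lemma IsLogConcave.measure_mul_le_norm_le_exp {n : ℕ} {ν : Measure (Euc n)}
    [IsProbabilityMeasure ν] (hlc : IsLogConcave ν) (hiso : IsIsotropic ν) (m : ℕ) :
    ν {x | m * (2 * √(n + 1)) ≤ ‖x‖} ≤ ENNReal.ofReal (exp (-(1 / 3 * m))) := by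
  rcases Nat.eq_zero_or_pos m with rfl | hm
  · simp
  set R := 2 * √(n + 1)
  have hR : 0 < R := by positivity
  have hball : ν {x | R ≤ ‖x‖} ≤ ENNReal.ofReal (1 - 3 / 4) := by
    refine (hiso.measure_le_norm_le hR).trans (ENNReal.ofReal_le_ofReal ?_)
    rw [div_le_iff₀ (by positivity), mul_pow, sq_sqrt (by positivity)]
    linarith
  refine (hlc.measure_mul_le_norm_le hR.le (by norm_num) (by norm_num) hball
    (by exact_mod_cast hm)).trans (ENNReal.ofReal_le_ofReal ?_)
  have hlog : Real.log (1 / 3) ≤ -(2 / 3) := by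
    linarith [log_le_sub_one_of_pos (by norm_num : (0 : ℝ) < 1 / 3)]
  rw [rpow_def_of_pos (by norm_num), exp_le_exp]
  norm_num at hlog ⊢
  nlinarith [(Nat.cast_nonneg m : (0 : ℝ) ≤ m)]

lemma lintegral_exp_le_of_measure_le_exp {α : Type*} [MeasurableSpace α] {ν : Measure α}
    {f : α → ℝ} (hf : Measurable f) (hf0 : 0 ≤ f) {c : ℝ} (hc : 0 ≤ c)
    (htail : ∀ m : ℕ, ν {x | m ≤ f x} ≤ ENNReal.ofReal (exp (-(c * m)))) :
    ∫⁻ x, ENNReal.ofReal (exp (c / 2 * f x)) ∂ν ≤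
      ENNReal.ofReal (exp (c / 2)) * (1 - ENNReal.ofReal (exp (-(c / 2))))⁻¹ := by
  have hpt : ∀ x, ENNReal.ofReal (exp (c / 2 * f x)) ≤ ∑' m : ℕ,
      {y | (m : ℝ) ≤ f y}.indicator (fun _ => ENNReal.ofReal (exp (c / 2 * (m + 1)))) x := by
    intro x
    -- already the single term `m = ⌊f x⌋₊` dominates
    refine le_trans ?_ (ENNReal.le_tsum ⌊f x⌋₊)
    rw [indicator_of_mem (show x ∈ {y | (⌊f x⌋₊ : ℝ) ≤ f y} from Nat.floor_le (hf0 x))]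
    gcongr
    exact (Nat.lt_floor_add_one _).le
  have hterm : ∀ m : ℕ, ENNReal.ofReal (exp (c / 2 * (m + 1))) * ENNReal.ofReal (exp (-(c * m)))
      = ENNReal.ofReal (exp (c / 2)) * ENNReal.ofReal (exp (-(c / 2))) ^ m := fun m => by
    rw [← ENNReal.ofReal_pow (exp_pos _).le, ← ENNReal.ofReal_mul (exp_pos _).le,
      ← ENNReal.ofReal_mul (exp_pos _).le, ← exp_nat_mul, ← exp_add, ← exp_add]
    ring_nf
  calc ∫⁻ x, ENNReal.ofReal (exp (c / 2 * f x)) ∂ν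
      ≤ ∫⁻ x, ∑' m : ℕ, {y | (m : ℝ) ≤ f y}.indicator
          (fun _ => ENNReal.ofReal (exp (c / 2 * (m + 1)))) x ∂ν := lintegral_mono hpt
    _ = ∑' m : ℕ, ENNReal.ofReal (exp (c / 2 * (m + 1))) * ν {x | (m : ℝ) ≤ f x} := by
      rw [lintegral_tsum fun m => (measurable_const.indicator
        (measurableSet_le measurable_const hf)).aemeasurable]
      simp only [lintegral_indicator_const (measurableSet_le measurable_const hf)]
    _ ≤ ∑' m : ℕ, ENNReal.ofReal (exp (c / 2)) * ENNReal.ofReal (exp (-(c / 2))) ^ m := by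
      refine ENNReal.tsum_le_tsum fun m => ?_
      rw [← hterm]
      gcongr
      exact htail m
    _ = _ := by rw [ENNReal.tsum_mul_left, ENNReal.tsum_geometric]

lemma exists_integral_exp_norm_le (n : ℕ) :
    ∃ b > 0, ∃ M : ℝ, ∀ ν : Measure (Euc n), IsProbabilityMeasure ν → IsLogConcave ν →
      IsIsotropic ν → Integrable (fun x => exp (b * ‖x‖)) ν ∧ ∫ x, exp (b * ‖x‖) ∂ν ≤ M := by
  set R := 2 * √(n + 1)
  have hR : 0 < R := by positivity
  set B := ENNReal.ofReal (exp (1 / 3 / 2)) * (1 - ENNReal.ofReal (exp (-(1 / 3 / 2))))⁻¹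
  have hB : B ≠ ⊤ := by
    refine ENNReal.mul_ne_top ENNReal.ofReal_ne_top (ENNReal.inv_ne_top.2 ?_)
    rw [Ne, tsub_eq_zero_iff_le, not_le, ← ENNReal.ofReal_one]
    exact (ENNReal.ofReal_lt_ofReal_iff one_pos).2 (exp_lt_one_iff.2 (by norm_num))
  refine ⟨1 / 3 / 2 / R, by positivity, B.toReal, fun ν _ hlc hiso => ?_⟩
  have hmom : ∫⁻ x, ENNReal.ofReal (exp (1 / 3 / 2 / R * ‖x‖)) ∂ν ≤ B := by
    have := lintegral_exp_le_of_measure_le_exp (ν := ν) (f := fun x => ‖x‖ / R)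
      (by fun_prop) (fun x => by positivity) (c := 1 / 3) (by norm_num) fun m => by
        simpa only [le_div_iff₀ hR] using hlc.measure_mul_le_norm_le_exp hiso m
    simpa only [mul_div_assoc', div_mul_eq_mul_div, one_div_mul_eq_div] using this
  have hmeas : AEStronglyMeasurable (fun x : Euc n => exp (1 / 3 / 2 / R * ‖x‖)) ν := by
    fun_prop
  have hnonneg : 0 ≤ᵐ[ν] fun x : Euc n => exp (1 / 3 / 2 / R * ‖x‖) :=
    ae_of_all _ fun x => (exp_pos _).le
  refine ⟨⟨hmeas, (hasFiniteIntegral_iff_ofReal hnonneg).2 (hmom.trans_lt hB.lt_top)⟩, ?_⟩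
  rw [integral_eq_lintegral_of_nonneg_ae hnonneg hmeas]
  exact ENNReal.toReal_mono hB hmom

section WeakConvergence

variable {X : Type*} [MeasurableSpace X]

lemma dist_integral_integral_mul_le {ν : Measure X} {g w χ : X → ℝ} {K : Set X} {δ : ℝ}
    (hδ : 0 ≤ δ) (hg : Integrable g ν) (hw : Integrable w ν) (hχ : AEStronglyMeasurable χ ν)
    (hχ01 : ∀ x, χ x ∈ Icc 0 1) (hχK : EqOn χ 1 K) (hgK : ∀ x ∉ K, ‖g x‖ ≤ δ * ‖w x‖) :
    dist (∫ x, g x ∂ν) (∫ x, g x * χ x ∂ν) ≤ δ * ∫ x, ‖w x‖ ∂ν := by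
  have hgχ : Integrable (fun x => g x * χ x) ν :=
    hg.mul_bdd hχ (c := 1) (ae_of_all _ fun x => by
      rw [Real.norm_of_nonneg (hχ01 x).1]; exact (hχ01 x).2)
  rw [dist_eq_norm, ← integral_sub hg hgχ, ← integral_const_mul]
  refine norm_integral_le_of_norm_le (hw.norm.const_mul δ) (ae_of_all _ fun x => ?_)
  by_cases hx : x ∈ K
  · rw [hχK hx, Pi.one_apply, mul_one, sub_self, norm_zero]
    exact mul_nonneg hδ (norm_nonneg _)
  · calc ‖g x - g x * χ x‖ = ‖g x‖ * (1 - χ x) := by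
          rw [← mul_one_sub, norm_mul, Real.norm_of_nonneg (sub_nonneg.2 (hχ01 x).2)]
      _ ≤ ‖g x‖ := mul_le_of_le_one_right (norm_nonneg _) (by linarith [(hχ01 x).1])
      _ ≤ δ * ‖w x‖ := hgK x hx

variable [TopologicalSpace X] [OpensMeasurableSpace X]

lemma integrable_of_isLittleO_cocompact {ν : Measure X} [IsFiniteMeasure ν] {g w : X → ℝ}
    (hg : Continuous g) (hgw : g =o[cocompact X] w) (hw : Integrable w ν) : Integrable g ν := by
  obtain ⟨K, hK, hgK⟩ := mem_cocompact.1 (hgw.bound one_pos)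
  obtain ⟨B, hB⟩ := hK.exists_bound_of_continuousOn hg.continuousOn
  refine ((integrable_const |B|).add hw.norm).mono' hg.aestronglyMeasurable
    (ae_of_all _ fun x => ?_)
  show ‖g x‖ ≤ |B| + ‖w x‖
  by_cases hx : x ∈ K
  · linarith [hB x hx, le_abs_self B, norm_nonneg (w x)]
  · have : ‖g x‖ ≤ 1 * ‖w x‖ := hgK hx
    linarith [abs_nonneg B]

variable [T2Space X] [LocallyCompactSpace X]

theorem tendsto_integral_of_isLittleO_cocompact {μ : Measure X} {μs : ℕ → Measure X}
    [IsFiniteMeasure μ] [∀ k, IsFiniteMeasure (μs k)] {g w : X → ℝ} {M : ℝ}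
    (hg : Continuous g) (hgw : g =o[cocompact X] w)
    (hwμ : Integrable w μ) (hwμs : ∀ k, Integrable w (μs k))
    (hMμ : ∫ x, ‖w x‖ ∂μ ≤ M) (hMμs : ∀ k, ∫ x, ‖w x‖ ∂(μs k) ≤ M)
    (hweak : ∀ h : X → ℝ, Continuous h → (∃ C : ℝ, ∀ x, |h x| ≤ C) →
      Tendsto (fun k => ∫ x, h x ∂(μs k)) atTop (𝓝 (∫ x, h x ∂μ))) :
    Tendsto (fun k => ∫ x, g x ∂(μs k)) atTop (𝓝 (∫ x, g x ∂μ)) := by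
  refine Metric.tendsto_atTop.2 fun ε hε => ?_
  set δ := ε / (3 * (|M| + 1))
  have hδ : 0 < δ := by positivity
  have hδM : δ * M < ε / 3 := by
    have : δ * (3 * (|M| + 1)) = ε := div_mul_cancel₀ _ (by positivity)
    nlinarith [le_abs_self M]
  obtain ⟨K, hK, hgK⟩ := mem_cocompact.1 (hgw.bound hδ)
  obtain ⟨χ, hχK, -, hχc, hχ01⟩ :=
    exists_continuous_one_zero_of_isCompact hK isClosed_empty (disjoint_empty K)
  have hclose : ∀ (ν : Measure X) [IsFiniteMeasure ν], Integrable w ν → ∫ x, ‖w x‖ ∂ν ≤ M →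
      dist (∫ x, g x ∂ν) (∫ x, g x * χ x ∂ν) < ε / 3 := fun ν _ hw hM =>
    (dist_integral_integral_mul_le hδ.le (integrable_of_isLittleO_cocompact hg hgw hw) hw
      χ.continuous.aestronglyMeasurable hχ01 hχK fun x hx => hgK hx).trans_lt
      ((mul_le_mul_of_nonneg_left hM hδ.le).trans_lt hδM)
  have hgχ : Continuous fun x => g x * χ x := hg.mul χ.continuous
  obtain ⟨C, hC⟩ := hgχ.bounded_above_of_compact_support (hχc.mul_left (f := g))
  obtain ⟨N, hN⟩ := Metric.tendsto_atTop.1 (hweak _ hgχ ⟨C, hC⟩) (ε / 3) (by positivity)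
  refine ⟨N, fun k hk => ?_⟩
  calc dist (∫ x, g x ∂(μs k)) (∫ x, g x ∂μ)
      ≤ dist (∫ x, g x ∂(μs k)) (∫ x, g x * χ x ∂(μs k))
        + dist (∫ x, g x * χ x ∂(μs k)) (∫ x, g x * χ x ∂μ)
        + dist (∫ x, g x * χ x ∂μ) (∫ x, g x ∂μ) := dist_triangle4 _ _ _ _
    _ < ε / 3 + ε / 3 + ε / 3 := by
      gcongr
      · exact hclose _ (hwμs k) (hMμs k)
      · exact hN k hk
      · rw [dist_comm]; exact hclose _ hwμ hMμ
    _ = ε := by ring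

end WeakConvergence

lemma isLittleO_exp_mul_norm_of_abs_le {E : Type*} [NormedAddCommGroup E] [ProperSpace E]
    {g : E → ℝ} {C p b : ℝ} (hb : 0 < b) (hg : ∀ x, |g x| ≤ C * (1 + ‖x‖ ^ p)) :
    g =o[cocompact E] fun x => exp (b * ‖x‖) := by
  have hpoly : (fun s : ℝ => 1 + s ^ p) =o[atTop] fun s => exp (b * s) := by
    simpa using
      (isLittleO_rpow_exp_pos_mul_atTop 0 hb).add (isLittleO_rpow_exp_pos_mul_atTop p hb)
  refine IsBigO.trans_isLittleO (g := fun x => 1 + ‖x‖ ^ p) ?_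
    (hpoly.comp_tendsto tendsto_norm_cocompact_atTop)
  refine IsBigO.of_bound C (Eventually.of_forall fun x => ?_)
  rw [Real.norm_eq_abs, Real.norm_of_nonneg (by positivity)]
  exact hg x

/-- weak convergence of isotropic log-concave measures implies
convergence of integrals of all continuous functions of polynomial growth; in
particular convergence of all moments. -/
theorem weak_implies_moments {n : ℕ} (μ : Measure (Euc n)) (μs : ℕ → Measure (Euc n))
    (hμp : IsProbabilityMeasure μ) (hμlc : IsLogConcave μ) (hμiso : IsIsotropic μ)
    (hp : ∀ k, IsProbabilityMeasure (μs k)) (hlc : ∀ k, IsLogConcave (μs k))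
    (hiso : ∀ k, IsIsotropic (μs k))
    (hweak : ∀ g : Euc n → ℝ, Continuous g → (∃ M : ℝ, ∀ x, |g x| ≤ M) →
      Tendsto (fun k => ∫ x, g x ∂(μs k)) atTop (𝓝 (∫ x, g x ∂μ))) :
    ∀ p : ℝ, 1 ≤ p → ∀ g : Euc n → ℝ, Continuous g →
      (∃ C : ℝ, ∀ x, |g x| ≤ C * (1 + ‖x‖ ^ p)) →
      Tendsto (fun k => ∫ x, g x ∂(μs k)) atTop (𝓝 (∫ x, g x ∂μ)) := by
  rintro p - g hg ⟨C, hgC⟩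
  obtain ⟨b, hb, M, hM⟩ := exists_integral_exp_norm_le n
  have hmom : ∀ ν : Measure (Euc n), IsProbabilityMeasure ν → IsLogConcave ν → IsIsotropic ν →
      Integrable (fun x => exp (b * ‖x‖)) ν ∧ ∫ x, ‖exp (b * ‖x‖)‖ ∂ν ≤ M := by
    simpa only [Real.norm_eq_abs, Real.abs_exp] using hM
  exact tendsto_integral_of_isLittleO_cocompact hg (isLittleO_exp_mul_norm_of_abs_le hb hgC)
    (hmom μ hμp hμlc hμiso).1 (fun k => (hmom _ (hp k) (hlc k) (hiso k)).1)
    (hmom μ hμp hμlc hμiso).2 (fun k => (hmom _ (hp k) (hlc k) (hiso k)).2) hweak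

end
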